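/- Let Q be a finite set of size m ≥ 1, n ≥ 1 an integer, p ≥ 1 and σ ≥ 0 reals, and define f(u) := (u² + 4p²)^p. Let z, z' : Q → ℝ be nonnegative functions, and suppose there exist reals Δ_q(k) ∈ [−1,1] (for q ∈ Q, k ∈ {1,…,n}) with Σ_{k=1}^n Δ_q(k) ≤ 0 and Σ_{k=1}^n Δ_q(k)² ≤ σ² for every q ∈ Q, such that Σ_{q∈Q} f(z'_q) ≤ (1/n) Σ_{k=1}^n Σ_{q∈Q} f(max{z_q + Δ_q(k), 0}). Then (Σ_{q∈Q} f(z'_q))^{1/p} ≤ (Σ_{q∈Q} f(z_q))^{1/p} + (2√e · p · σ² / n) · m^{1/p}. -/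

import Mathlib

/-!
Write `f u = (u² + 4p²)^p` and `Φ = ∑ q, f (z q)`. On `[u - 1, u + 1]` with `u ≥ 0` the second
derivative of `f` is at most `4 √e p² (u² + 4p²)^(p-1)`, so a second-order Taylor bound, summed
over `k`, kills the first-order term (`f' (z q) ≥ 0` and `∑ k, Δ q k ≤ 0`) and gives
`∑ q, f (z' q) ≤ Φ + (2 √e p² σ² / n) ∑ q, (z q² + 4p²)^(p-1)`. Hölder bounds the last sum by
`m^(1/p) Φ^(1-1/p)`, and Bernoulli's inequality `a^p + p a^(p-1) K ≤ (a + K)^p` with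
`a = Φ^(1/p)` turns this into the claim after taking `p`-th roots.
-/

open Real Set Finset

theorem ConvexOn.add_mul_sub_le_of_hasDerivAt {S : Set ℝ} {g : ℝ → ℝ} {g' x y : ℝ}
    (hg : ConvexOn ℝ S g) (hx : x ∈ S) (hy : y ∈ S) (hd : HasDerivAt g g' x) :
    g x + g' * (y - x) ≤ g y := by
  rcases lt_trichotomy x y with hxy | rfl | hxy
  · have := hg.le_slope_of_hasDerivAt hx hy hxy hd
    rw [slope_def_field, le_div_iff₀ (sub_pos.2 hxy)] at this
    linarith
  · simp
  · have := hg.slope_le_of_hasDerivAt hy hx hxy hd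
    rw [slope_def_field, div_le_iff₀ (sub_pos.2 hxy)] at this
    linarith

theorem Real.sum_rpow_sub_one_le {ι : Type*} (s : Finset ι) {p : ℝ} (hp : 1 ≤ p)
    {x : ι → ℝ} (hx : ∀ i, 0 < x i) :
    ∑ i ∈ s, x i ^ (p - 1) ≤ (#s : ℝ) ^ (1 / p) * (∑ i ∈ s, x i ^ p) ^ (1 - 1 / p) := by
  have key := inner_le_weight_mul_Lp_of_nonneg s hp (fun i ↦ x i ^ p) (fun i ↦ (x i)⁻¹)
    (fun i ↦ (rpow_pos_of_pos (hx i) p).le) (fun i ↦ (inv_pos.2 (hx i)).le)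
  have hweighted (i : ι) : x i ^ p * (x i)⁻¹ = x i ^ (p - 1) := by
    rw [rpow_sub_one (hx i).ne', div_eq_mul_inv]
  have hcancel (i : ι) : x i ^ p * (x i)⁻¹ ^ p = 1 := by
    rw [inv_rpow (hx i).le, mul_inv_cancel₀ (rpow_pos_of_pos (hx i) p).ne']
  simp only [hweighted, hcancel, sum_const, nsmul_eq_mul, mul_one] at key
  rw [mul_comm, one_div]
  exact key

theorem Real.rpow_add_mul_rpow_sub_one_le {p a K : ℝ} (hp : 1 ≤ p) (ha : 0 ≤ a)
    (hK : 0 ≤ K) :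
    a ^ p + p * a ^ (p - 1) * K ≤ (a + K) ^ p := by
  have := (convexOn_rpow hp).add_mul_sub_le_of_hasDerivAt (mem_Ici.2 ha)
    (mem_Ici.2 (add_nonneg ha hK)) (hasDerivAt_rpow_const (Or.inr hp))
  simpa only [add_sub_cancel_left] using this

theorem Real.rpow_inv_le_add_of_le {p Φ Ψ K : ℝ} (hp : 1 ≤ p) (hΦ : 0 ≤ Φ)
    (hΨ : 0 ≤ Ψ) (hK : 0 ≤ K) (h : Ψ ≤ Φ + p * Φ ^ (1 - 1 / p) * K) :
    Ψ ^ (1 / p) ≤ Φ ^ (1 / p) + K := by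
  have hp0 : p ≠ 0 := by positivity
  set a := Φ ^ (1 / p)
  have ha : 0 ≤ a := rpow_nonneg hΦ _
  have hap : a ^ p = Φ := by rw [← rpow_mul hΦ, one_div_mul_cancel hp0, rpow_one]
  have hap1 : a ^ (p - 1) = Φ ^ (1 - 1 / p) := by
    rw [← rpow_mul hΦ]; congr 1; field_simp
  have : Ψ ≤ (a + K) ^ p := by
    calc Ψ ≤ a ^ p + p * a ^ (p - 1) * K := by rwa [hap, hap1]
      _ ≤ (a + K) ^ p := rpow_add_mul_rpow_sub_one_le hp ha hK
  calc Ψ ^ (1 / p) ≤ ((a + K) ^ p) ^ (1 / p) := by gcongr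
    _ = a + K := by rw [← rpow_mul (by positivity), mul_one_div_cancel hp0, rpow_one]

theorem hasDerivAt_sq_add_rpow {c : ℝ} (hc : 0 < c) (p x : ℝ) :
    HasDerivAt (fun x ↦ (x ^ 2 + c) ^ p) (2 * p * x * (x ^ 2 + c) ^ (p - 1)) x := by
  have := ((hasDerivAt_pow 2 x).add_const c).rpow_const (p := p) (Or.inl (by positivity))
  convert this using 1
  push_cast
  ring

theorem hasDerivAt_mul_sq_add_rpow_sub_one {c : ℝ} (hc : 0 < c) (p x : ℝ) :
    HasDerivAt (fun x ↦ 2 * p * x * (x ^ 2 + c) ^ (p - 1))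
      (2 * p * (x ^ 2 + c) ^ (p - 1) + 4 * p * (p - 1) * x ^ 2 * (x ^ 2 + c) ^ (p - 2)) x := by
  have := ((hasDerivAt_id x).const_mul (2 * p)).mul (hasDerivAt_sq_add_rpow hc (p - 1) x)
  refine this.congr_deriv ?_
  rw [show p - 1 - 1 = p - 2 by ring]
  simp only [id]
  ring

theorem sq_add_rpow_sub_one_le_sqrt_exp_mul {p u x : ℝ} (hp : 1 ≤ p) (hu : 0 ≤ u)
    (hx : x ∈ Icc (u - 1) (u + 1)) :
    (x ^ 2 + 4 * p ^ 2) ^ (p - 1) ≤ √(exp 1) * (u ^ 2 + 4 * p ^ 2) ^ (p - 1) := by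
  obtain ⟨hx₁, hx₂⟩ := hx
  set A := u ^ 2 + 4 * p ^ 2
  have hA : 0 < A := by positivity
  set t := (2 * u + 1) / A
  have hB : x ^ 2 + 4 * p ^ 2 ≤ A * exp t := by
    have : A * (1 + t) = A + (2 * u + 1) := by simp only [t]; field_simp
    nlinarith [add_one_le_exp t]
  -- `2 (2u + 1)(p - 1) ≤ A` rearranges to `(u - 2(p - 1))² + 6p - 2 ≥ 0`.
  have ht : t * (p - 1) ≤ 1 / 2 := by
    rw [div_mul_eq_mul_div, div_le_iff₀ hA]
    nlinarith [sq_nonneg (u - 2 * (p - 1))]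
  calc (x ^ 2 + 4 * p ^ 2) ^ (p - 1) ≤ (A * exp t) ^ (p - 1) := by
        gcongr
    _ = A ^ (p - 1) * exp (t * (p - 1)) := by rw [mul_rpow hA.le (exp_pos t).le, ← exp_mul]
    _ ≤ A ^ (p - 1) * exp (1 / 2) := by gcongr
    _ = √(exp 1) * A ^ (p - 1) := by rw [← exp_half, mul_comm, one_div]

theorem deriv2_sq_add_rpow_le {p u x : ℝ} (hp : 1 ≤ p) (hu : 0 ≤ u)
    (hx : x ∈ Icc (u - 1) (u + 1)) :
    2 * p * (x ^ 2 + 4 * p ^ 2) ^ (p - 1)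
        + 4 * p * (p - 1) * x ^ 2 * (x ^ 2 + 4 * p ^ 2) ^ (p - 2)
      ≤ 4 * √(exp 1) * p ^ 2 * (u ^ 2 + 4 * p ^ 2) ^ (p - 1) := by
  set B := x ^ 2 + 4 * p ^ 2
  have hB : 0 < B := by positivity
  have hx2 : x ^ 2 * B ^ (p - 2) ≤ B ^ (p - 1) := by
    calc x ^ 2 * B ^ (p - 2) ≤ B * B ^ (p - 2) := by gcongr; simp only [B]; nlinarith
      _ = B ^ (p - 1) := by rw [mul_comm, ← rpow_add_one hB.ne']; ring_nf
  have hB1 := sq_add_rpow_sub_one_le_sqrt_exp_mul hp hu hx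
  have hp1 : 0 ≤ 4 * p * (p - 1) := by nlinarith
  calc 2 * p * B ^ (p - 1) + 4 * p * (p - 1) * x ^ 2 * B ^ (p - 2)
      ≤ 2 * p * B ^ (p - 1) + 4 * p * (p - 1) * B ^ (p - 1) := by
        rw [mul_assoc _ (x ^ 2)]; gcongr
    _ ≤ 4 * p ^ 2 * B ^ (p - 1) := by nlinarith [rpow_nonneg hB.le (p - 1)]
    _ ≤ 4 * p ^ 2 * (√(exp 1) * (u ^ 2 + 4 * p ^ 2) ^ (p - 1)) := by gcongr
    _ = 4 * √(exp 1) * p ^ 2 * (u ^ 2 + 4 * p ^ 2) ^ (p - 1) := by ring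

theorem sq_add_rpow_add_le {p u Δ : ℝ} (hp : 1 ≤ p) (hu : 0 ≤ u) (hΔ₁ : -1 ≤ Δ)
    (hΔ₂ : Δ ≤ 1) :
    ((u + Δ) ^ 2 + 4 * p ^ 2) ^ p ≤ (u ^ 2 + 4 * p ^ 2) ^ p
      + 2 * p * u * (u ^ 2 + 4 * p ^ 2) ^ (p - 1) * Δ
      + 2 * √(exp 1) * p ^ 2 * (u ^ 2 + 4 * p ^ 2) ^ (p - 1) * Δ ^ 2 := by
  have hc : 0 < 4 * p ^ 2 := by positivity
  set M := 4 * √(exp 1) * p ^ 2 * (u ^ 2 + 4 * p ^ 2) ^ (p - 1)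
  -- `M` dominates the second derivative of `x ↦ (x² + 4p²)^p` on `[u - 1, u + 1]`, so `h` is
  -- convex there and the bound is its tangent line inequality at `u`.
  set h : ℝ → ℝ := fun x ↦ M / 2 * x ^ 2 - (x ^ 2 + 4 * p ^ 2) ^ p
  have hh' (x : ℝ) : HasDerivAt h (M * x - 2 * p * x * (x ^ 2 + 4 * p ^ 2) ^ (p - 1)) x := by
    refine (((hasDerivAt_pow 2 x).const_mul (M / 2)).sub
      (hasDerivAt_sq_add_rpow hc p x)).congr_deriv ?_
    push_cast
    ring
  have hh'' (x : ℝ) : HasDerivAt (fun x ↦ M * x - 2 * p * x * (x ^ 2 + 4 * p ^ 2) ^ (p - 1))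
      (M - (2 * p * (x ^ 2 + 4 * p ^ 2) ^ (p - 1)
        + 4 * p * (p - 1) * x ^ 2 * (x ^ 2 + 4 * p ^ 2) ^ (p - 2))) x := by
    refine (((hasDerivAt_id x).const_mul M).sub
      (hasDerivAt_mul_sq_add_rpow_sub_one hc p x)).congr_deriv ?_
    simp
  have hconv : ConvexOn ℝ (Icc (u - 1) (u + 1)) h := by
    refine convexOn_of_hasDerivWithinAt2_nonneg (convex_Icc _ _)
      (fun x _ ↦ (hh' x).continuousAt.continuousWithinAt)
      (fun x _ ↦ (hh' x).hasDerivWithinAt) (fun x _ ↦ (hh'' x).hasDerivWithinAt) ?_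
    intro x hx
    linarith [deriv2_sq_add_rpow_le hp hu (interior_subset hx)]
  have := hconv.add_mul_sub_le_of_hasDerivAt (x := u) (y := u + Δ)
    ⟨by linarith, by linarith⟩ ⟨by linarith, by linarith⟩ (hh' u)
  simp only [h, add_sub_cancel_left] at this
  linarith

theorem sq_add_rpow_max_add_le {p u Δ : ℝ} (hp : 1 ≤ p) (hu : 0 ≤ u) (hΔ₁ : -1 ≤ Δ)
    (hΔ₂ : Δ ≤ 1) :
    ((max (u + Δ) 0) ^ 2 + 4 * p ^ 2) ^ p ≤ (u ^ 2 + 4 * p ^ 2) ^ p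
      + 2 * p * u * (u ^ 2 + 4 * p ^ 2) ^ (p - 1) * Δ
      + 2 * √(exp 1) * p ^ 2 * (u ^ 2 + 4 * p ^ 2) ^ (p - 1) * Δ ^ 2 := by
  refine le_trans ?_ (sq_add_rpow_add_le hp hu hΔ₁ hΔ₂)
  have : (max (u + Δ) 0) ^ 2 ≤ (u + Δ) ^ 2 := by
    rcases le_total (u + Δ) 0 with h | h <;> simp [h, sq_nonneg]
  gcongr

theorem sum_sq_add_rpow_max_add_le {ι : Type*} (s : Finset ι) {p u σ : ℝ} {Δ : ι → ℝ}
    (hp : 1 ≤ p) (hu : 0 ≤ u) (hΔ : ∀ k, -1 ≤ Δ k ∧ Δ k ≤ 1) (hsum : ∑ k ∈ s, Δ k ≤ 0)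
    (hsq : ∑ k ∈ s, Δ k ^ 2 ≤ σ ^ 2) :
    ∑ k ∈ s, ((max (u + Δ k) 0) ^ 2 + 4 * p ^ 2) ^ p ≤
      #s * (u ^ 2 + 4 * p ^ 2) ^ p
        + 2 * √(exp 1) * p ^ 2 * (u ^ 2 + 4 * p ^ 2) ^ (p - 1) * σ ^ 2 := by
  set A := u ^ 2 + 4 * p ^ 2
  have hA : 0 ≤ A ^ (p - 1) := rpow_nonneg (by positivity) _
  calc ∑ k ∈ s, ((max (u + Δ k) 0) ^ 2 + 4 * p ^ 2) ^ p
      ≤ ∑ k ∈ s, (A ^ p + 2 * p * u * A ^ (p - 1) * Δ k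
          + 2 * √(exp 1) * p ^ 2 * A ^ (p - 1) * Δ k ^ 2) :=
        sum_le_sum fun k _ ↦ sq_add_rpow_max_add_le hp hu (hΔ k).1 (hΔ k).2
    _ = #s * A ^ p + 2 * p * u * A ^ (p - 1) * ∑ k ∈ s, Δ k
          + 2 * √(exp 1) * p ^ 2 * A ^ (p - 1) * ∑ k ∈ s, Δ k ^ 2 := by
        rw [sum_add_distrib, sum_add_distrib, ← mul_sum, ← mul_sum, sum_const, nsmul_eq_mul]
    _ ≤ #s * A ^ p + 2 * p * u * A ^ (p - 1) * 0
          + 2 * √(exp 1) * p ^ 2 * A ^ (p - 1) * σ ^ 2 := by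
        gcongr
    _ = #s * A ^ p + 2 * √(exp 1) * p ^ 2 * A ^ (p - 1) * σ ^ 2 := by ring

theorem sum_sum_sq_add_rpow_max_add_le {Q ι : Type*} [Fintype Q] [Fintype ι] {p σ : ℝ}
    {z : Q → ℝ} {Δ : Q → ι → ℝ} (hp : 1 ≤ p) (hz : ∀ q, 0 ≤ z q)
    (hΔ : ∀ q k, -1 ≤ Δ q k ∧ Δ q k ≤ 1) (hsum : ∀ q, ∑ k, Δ q k ≤ 0)
    (hsq : ∀ q, ∑ k, Δ q k ^ 2 ≤ σ ^ 2) :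
    ∑ k, ∑ q, ((max (z q + Δ q k) 0) ^ 2 + 4 * p ^ 2) ^ p ≤
      Fintype.card ι * ∑ q, (z q ^ 2 + 4 * p ^ 2) ^ p
        + 2 * √(exp 1) * p ^ 2 * σ ^ 2 * ∑ q, (z q ^ 2 + 4 * p ^ 2) ^ (p - 1) := by
  rw [sum_comm, mul_sum, mul_sum, ← sum_add_distrib]
  refine sum_le_sum fun q _ ↦ ?_
  have := sum_sq_add_rpow_max_add_le univ hp (hz q) (hΔ q) (hsum q) (hsq q)
  rw [card_univ] at this
  linarith

theorem one_step_growth_bound_general (Q : Type*) [Fintype Q]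
    (n : ℕ) (hn : 1 ≤ n) (p σ : ℝ) (hp : 1 ≤ p)
    (z z' : Q → ℝ) (hz : ∀ q, 0 ≤ z q)
    (hΔ : ∃ Δ : Q → Fin n → ℝ,
      (∀ q k, -1 ≤ Δ q k ∧ Δ q k ≤ 1) ∧
      (∀ q, ∑ k, Δ q k ≤ 0) ∧
      (∀ q, ∑ k, (Δ q k) ^ 2 ≤ σ ^ 2) ∧
      (∑ q, ((z' q) ^ 2 + 4 * p ^ 2) ^ p ≤
        (1 / (n : ℝ)) * ∑ k, ∑ q, ((max (z q + Δ q k) 0) ^ 2 + 4 * p ^ 2) ^ p)) :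
    (∑ q, ((z' q) ^ 2 + 4 * p ^ 2) ^ p) ^ (1 / p) ≤
      (∑ q, ((z q) ^ 2 + 4 * p ^ 2) ^ p) ^ (1 / p) +
        (2 * Real.sqrt (Real.exp 1) * p * σ ^ 2 / (n : ℝ)) *
          (Fintype.card Q : ℝ) ^ (1 / p) := by
  obtain ⟨Δ, hbd, hsum, hsq, hpot⟩ := hΔ
  have hn0 : (n : ℝ) ≠ 0 := Nat.cast_ne_zero.2 (by omega)
  set Φ := ∑ q, (z q ^ 2 + 4 * p ^ 2) ^ p
  set C := 2 * √(exp 1) * p ^ 2 * σ ^ 2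
  have hrows := sum_sum_sq_add_rpow_max_add_le hp hz hbd hsum hsq
  have hHolder := sum_rpow_sub_one_le univ hp (x := fun q ↦ z q ^ 2 + 4 * p ^ 2)
    fun q ↦ by positivity
  rw [Fintype.card_fin] at hrows
  rw [card_univ] at hHolder
  refine rpow_inv_le_add_of_le hp (by positivity) (by positivity) (by positivity) ?_
  calc ∑ q, (z' q ^ 2 + 4 * p ^ 2) ^ p
      ≤ 1 / n * (n * Φ + C * ∑ q, (z q ^ 2 + 4 * p ^ 2) ^ (p - 1)) := by
        refine hpot.trans ?_
        gcongr
    _ = Φ + C / n * ∑ q, (z q ^ 2 + 4 * p ^ 2) ^ (p - 1) := by field_simp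
    _ ≤ Φ + C / n * ((Fintype.card Q) ^ (1 / p) * Φ ^ (1 - 1 / p)) := by gcongr
    _ = Φ + p * Φ ^ (1 - 1 / p)
          * (2 * √(exp 1) * p * σ ^ 2 / n * (Fintype.card Q) ^ (1 / p)) := by
        ring

/-- **One-step growth bound for the `p`-potential.**
Let `Q` be a finite set of size `m ≥ 1`, `n ≥ 1`, `p ≥ 1`, `σ ≥ 0`, and
`f u = (u² + 4p²) ^ p`. Suppose `z, z' : Q → ℝ` are nonnegative and there exist
increments `Δ q k ∈ [-1,1]` satisfying the first- and second-moment conditions,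
such that the potential of `z'` is at most the average potential over the `n`
reference increments. Then
`(∑ q, f (z' q)) ^ (1/p) ≤ (∑ q, f (z q)) ^ (1/p) + (2 √e p σ² / n) m ^ (1/p)`. -/
theorem one_step_growth_bound (Q : Type*) [Fintype Q] (hm : 1 ≤ Fintype.card Q)
    (n : ℕ) (hn : 1 ≤ n) (p σ : ℝ) (hp : 1 ≤ p) (hσ : 0 ≤ σ)
    (z z' : Q → ℝ) (hz : ∀ q, 0 ≤ z q) (hz' : ∀ q, 0 ≤ z' q)
    (hΔ : ∃ Δ : Q → Fin n → ℝ,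
      (∀ q k, -1 ≤ Δ q k ∧ Δ q k ≤ 1) ∧
      (∀ q, ∑ k, Δ q k ≤ 0) ∧
      (∀ q, ∑ k, (Δ q k) ^ 2 ≤ σ ^ 2) ∧
      (∑ q, ((z' q) ^ 2 + 4 * p ^ 2) ^ p ≤
        (1 / (n : ℝ)) * ∑ k, ∑ q, ((max (z q + Δ q k) 0) ^ 2 + 4 * p ^ 2) ^ p)) :
    (∑ q, ((z' q) ^ 2 + 4 * p ^ 2) ^ p) ^ (1 / p) ≤
      (∑ q, ((z q) ^ 2 + 4 * p ^ 2) ^ p) ^ (1 / p) +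
        (2 * Real.sqrt (Real.exp 1) * p * σ ^ 2 / (n : ℝ)) *
          (Fintype.card Q : ℝ) ^ (1 / p) :=
  one_step_growth_bound_general Q n hn p σ hp z z' hz hΔ
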